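/- (Mixed-integer obstacle avoidance, Corollary 1.) Let h_1,…,h_M ∈ ℝ^q and k_1,…,k_M ∈ ℝ define M hyperplanes, let σ : {1,…,M} → {−1, +1} be a sign tuple, and let the obstacle be the polyhedral cell A(σ) = {x ∈ ℝ^q : σ(m)·⟨h_m, x⟩ ≤ σ(m)·k_m for all m = 1,…,M}. Let T ∈ ℝ and suppose for every index i with d − 1 ≤ i ≤ n there are binary variables α_{i,1},…,α_{i,M} ∈ {0,1} such that: (a) Σ_{m=1}^{M} α_{i,m} ≤ M − 1, and (b) −σ(m)·⟨h_m, p_j⟩ < −σ(m)·k_m + T·α_{i,m} for all m = 1,…,M and all j with i − d + 1 ≤ j ≤ i. Then the B-spline curve avoids the obstacle: z(t) ∉ A(σ) for every t with τ_{d−1} ≤ t < τ_{n+1}. -/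

import Mathlib

/-!
On a knot span `[τ i, τ (i + 1))` only the `d` basis functions `B_{i-d+1,d}, …, B_{i,d}` are
nonzero; they are nonnegative and sum to one, so `z(t)` lies in the convex hull of the control
points `p_{i-d+1}, …, p_i`. Since the binary variables of that window sum to at most `M - 1`, one
of them vanishes, and the big-`T` constraint for it says that the whole window lies strictly on the
far side of the corresponding hyperplane. That open half-space is convex, so it contains `z(t)`,
which therefore violates one of the inequalities defining the cell.
-/

/-- Cox–de Boor B-spline basis function `B_{i,d}(t)` of order `d` for the knot
vector `τ`.  In Lean, division by zero yields zero, which matches the standard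
convention that any term of the recursion whose denominator vanishes is taken
to be zero. -/
noncomputable def bspline (τ : ℕ → ℝ) : ℕ → ℕ → ℝ → ℝ
  | 0, _, _ => 0
  | 1, i, t => if τ i ≤ t ∧ t < τ (i + 1) then 1 else 0
  | d + 2, i, t =>
      (t - τ i) / (τ (i + d + 1) - τ i) * bspline τ (d + 1) i t
      + (τ (i + d + 2) - t) / (τ (i + d + 2) - τ (i + 1)) * bspline τ (d + 1) (i + 1) t

open Finset

section BSpline

variable {τ : ℕ → ℝ}

theorem bspline_congr {τ₁ τ₂ : ℕ → ℝ} :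
    ∀ (d i : ℕ) (t : ℝ), (∀ r ≤ d, τ₁ (i + r) = τ₂ (i + r)) →
      bspline τ₁ d i t = bspline τ₂ d i t
  | 0, _, _, _ => rfl
  | 1, i, t, h => by
      have h₀ := h 0 (by omega)
      have h₁ := h 1 (by omega)
      simp only [Nat.add_zero] at h₀
      simp only [bspline, h₀, h₁]
  | d + 2, i, t, h => by
      have e₁ := bspline_congr (d + 1) i t fun r hr => h r (by omega)
      have e₂ := bspline_congr (d + 1) (i + 1) t fun r hr => by
        simpa only [Nat.add_right_comm i 1 r, Nat.add_assoc] using h (r + 1) (by omega)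
      have h₀ := h 0 (by omega)
      have h₁ := h 1 (by omega)
      have h₂ := h (d + 1) (by omega)
      have h₃ := h (d + 2) (by omega)
      simp only [Nat.add_zero] at h₀
      simp only [← Nat.add_assoc] at h₂ h₃
      simp only [bspline, e₁, e₂, h₀, h₁, h₂, h₃]

theorem bspline_eq_zero_of_notMem_Ico (hτ : Monotone τ) :
    ∀ (d i : ℕ) (t : ℝ), t ∉ Set.Ico (τ i) (τ (i + d)) → bspline τ d i t = 0
  | 0, _, _, _ => rfl
  | 1, _, _, ht => if_neg ht
  | d + 2, i, t, ht => by
      rw [Set.mem_Ico, not_and_or, not_le, not_lt] at ht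
      have z₁ : bspline τ (d + 1) i t = 0 := by
        refine bspline_eq_zero_of_notMem_Ico hτ (d + 1) i t fun h => ?_
        rcases ht with ht | ht
        · exact h.1.not_gt ht
        · exact h.2.not_ge ((hτ (by omega)).trans ht)
      have z₂ : bspline τ (d + 1) (i + 1) t = 0 := by
        refine bspline_eq_zero_of_notMem_Ico hτ (d + 1) (i + 1) t fun h => ?_
        rcases ht with ht | ht
        · exact h.1.not_gt (ht.trans_le (hτ (by omega)))
        · exact h.2.not_ge (le_of_eq_of_le (congrArg τ (by omega)) ht)
      simp only [bspline, z₁, z₂, mul_zero, add_zero]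

theorem bspline_nonneg (hτ : Monotone τ) : ∀ (d i : ℕ) (t : ℝ), 0 ≤ bspline τ d i t
  | 0, _, _ => le_rfl
  | 1, i, t => by
      simp only [bspline]
      split <;> norm_num
  | d + 2, i, t => by
      have ih₁ := bspline_nonneg hτ (d + 1) i t
      have ih₂ := bspline_nonneg hτ (d + 1) (i + 1) t
      simp only [bspline]
      refine add_nonneg ?_ ?_
      · rcases lt_or_ge t (τ i) with ht | ht
        · rw [bspline_eq_zero_of_notMem_Ico hτ (d + 1) i t fun h => h.1.not_gt ht, mul_zero]
        · exact mul_nonneg (div_nonneg (sub_nonneg.2 ht) (sub_nonneg.2 (hτ (by omega)))) ih₁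
      · rcases le_or_gt (τ (i + d + 2)) t with ht | ht
        · rw [bspline_eq_zero_of_notMem_Ico hτ (d + 1) (i + 1) t
            fun h => h.2.not_ge (le_of_eq_of_le (congrArg τ (by omega)) ht),
            mul_zero]
        · exact mul_nonneg (div_nonneg (sub_nonneg.2 ht.le) (sub_nonneg.2 (hτ (by omega)))) ih₂

theorem sum_bspline_eq_one (hτ : StrictMono τ) :
    ∀ (d c : ℕ) (t : ℝ), τ (c + d) ≤ t → t < τ (c + d + 1) →
      ∑ s ∈ range (d + 1), bspline τ (d + 1) (c + s) t = 1
  | 0, c, t, h₁, h₂ => by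
      simp only [Nat.add_zero] at h₁ h₂
      simp only [zero_add, sum_range_one, Nat.add_zero, bspline, if_pos (And.intro h₁ h₂)]
  | d + 1, c, t, h₁, h₂ => by
      have ih := sum_bspline_eq_one hτ d (c + 1) t
        (by rwa [Nat.add_right_comm, Nat.add_assoc])
        (by rwa [Nat.add_right_comm c 1 d, Nat.add_assoc c])
      have z₀ : bspline τ (d + 1) (c + 0) t = 0 :=
        bspline_eq_zero_of_notMem_Ico hτ.monotone (d + 1) (c + 0) t fun h => h.2.not_ge h₁
      have z₁ : bspline τ (d + 1) (c + (d + 1) + 1) t = 0 :=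
        bspline_eq_zero_of_notMem_Ico hτ.monotone (d + 1) _ t fun h => h.1.not_gt h₂
      -- the right term of `B_{c+s,d+2}` and the left term of `B_{c+s+1,d+2}` recombine
      -- to `B_{c+s+1,d+1}`
      have telescope : ∀ s ∈ range (d + 1),
          (t - τ (c + (s + 1))) / (τ (c + (s + 1) + d + 1) - τ (c + (s + 1)))
              * bspline τ (d + 1) (c + (s + 1)) t
            + (τ (c + s + d + 2) - t) / (τ (c + s + d + 2) - τ (c + s + 1))
              * bspline τ (d + 1) (c + s + 1) t
          = bspline τ (d + 1) (c + 1 + s) t := by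
        intro s _
        have hlt : τ (c + s + 1) < τ (c + s + d + 2) := hτ (by omega)
        rw [show c + (s + 1) + d + 1 = c + s + d + 2 by omega,
          show c + (s + 1) = c + s + 1 by omega, show c + 1 + s = c + s + 1 by omega, ← add_mul, ← add_div,
          sub_add_sub_cancel', div_self (sub_ne_zero.2 hlt.ne'), one_mul]
      simp only [bspline]
      rw [sum_add_distrib, sum_range_succ' _ (d + 1), sum_range_succ _ (d + 1), z₀, z₁,
        mul_zero, mul_zero, add_zero, add_zero, ← sum_add_distrib, sum_congr rfl telescope, ih]

theorem sum_bspline_smul_mem_convexHull {E : Type*} [AddCommGroup E] [Module ℝ E]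
    (hτ : StrictMono τ) (p : ℕ → E) {e i n : ℕ} (hei : e ≤ i) (hin : i ≤ n) {t : ℝ}
    (ht₁ : τ i ≤ t) (ht₂ : t < τ (i + 1)) :
    ∑ j ∈ range (n + 1), bspline τ (e + 1) j t • p j ∈ convexHull ℝ (p '' Set.Icc (i - e) i) := by
  have hsupp : ∑ j ∈ range (n + 1), bspline τ (e + 1) j t • p j
      = ∑ j ∈ Icc (i - e) i, bspline τ (e + 1) j t • p j := by
    refine (sum_subset (fun j hj => ?_) fun j _ hj => ?_).symm
    · simp only [mem_Icc, mem_range] at hj ⊢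
      omega
    · rw [mem_Icc, not_and_or, not_le, not_le] at hj
      refine smul_eq_zero_of_left ?_ _
      refine bspline_eq_zero_of_notMem_Ico hτ.monotone _ _ _ fun h => ?_
      rcases hj with hj | hj
      · exact h.2.not_ge (ht₁.trans' (hτ.monotone (by omega)))
      · exact h.1.not_gt (ht₂.trans_le (hτ.monotone (by omega)))
  have hunity : ∑ j ∈ Icc (i - e) i, bspline τ (e + 1) j t = 1 := by
    rw [← Ico_add_one_right_eq_Icc, sum_Ico_eq_sum_range,
      show i + 1 - (i - e) = e + 1 by omega]
    exact sum_bspline_eq_one hτ e (i - e) t (by rwa [Nat.sub_add_cancel hei])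
      (by rwa [Nat.sub_add_cancel hei])
  rw [hsupp]
  exact (convex_convexHull ℝ _).sum_mem (fun j _ => bspline_nonneg hτ.monotone _ _ _) hunity
    fun j hj => subset_convexHull ℝ _ ⟨j, by simpa only [mem_Icc, Set.mem_Icc] using hj, rfl⟩

end BSpline

theorem exists_strictMono_eq_of_le {τ : ℕ → ℝ} {m : ℕ} (hτ : ∀ j < m, τ j < τ (j + 1)) :
    ∃ τ' : ℕ → ℝ, StrictMono τ' ∧ ∀ j ≤ m, τ' j = τ j := by
  refine ⟨fun j => if j ≤ m then τ j else τ m + ((j : ℝ) - m), strictMono_nat_of_lt_succ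
    fun j => ?_, fun j hj => if_pos hj⟩
  by_cases hj : j + 1 ≤ m
  · simpa only [if_pos hj, if_pos (Nat.le_of_succ_le hj)] using hτ j hj
  · by_cases hjm : j ≤ m
    · obtain rfl : j = m := by omega
      simp only [if_pos le_rfl, if_neg hj]
      push_cast
      linarith
    · simp only [if_neg hj, if_neg hjm]
      push_cast
      linarith

theorem exists_le_lt_le_lt_succ (τ : ℕ → ℝ) {a b : ℕ} (hab : a < b) {t : ℝ}
    (ha : τ a ≤ t) (hb : t < τ b) : ∃ i, a ≤ i ∧ i < b ∧ τ i ≤ t ∧ t < τ (i + 1) := by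
  induction b, hab using Nat.le_induction with
  | base => exact ⟨a, le_rfl, Nat.lt_succ_self a, ha, hb⟩
  | succ b hab ih =>
    by_cases hbt : t < τ b
    · obtain ⟨i, hai, hib, hi⟩ := ih hbt
      exact ⟨i, hai, hib.trans (Nat.lt_succ_self b), hi⟩
    · exact ⟨b, by omega, Nat.lt_succ_self b, le_of_not_gt hbt, hb⟩

theorem exists_eq_zero_of_sum_le_sub_one {M : ℕ} {α : ℕ → ℝ}
    (h01 : ∀ l < M, α l = 0 ∨ α l = 1) (hsum : ∑ l ∈ range M, α l ≤ (M : ℝ) - 1) :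
    ∃ l < M, α l = 0 := by
  by_contra! hne
  have hone : ∀ l ∈ range M, α l = 1 := fun l hl =>
    (h01 l (mem_range.1 hl)).resolve_left (hne l (mem_range.1 hl))
  rw [sum_congr rfl hone, sum_const, card_range, nsmul_one] at hsum
  linarith

open scoped RealInnerProductSpace

-- Here `n = m - d`, and the hyperplanes are indexed `0, …, M - 1`.
theorem bspline_mixed_integer_obstacle_avoidance_general (q m d M : ℕ) (τ : ℕ → ℝ)
    (hτ : ∀ j, j < m → τ j < τ (j + 1))
    (hd : 1 ≤ d) (hdm : d ≤ m)
    (p : ℕ → EuclideanSpace ℝ (Fin q))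
    (h : ℕ → EuclideanSpace ℝ (Fin q)) (k : ℕ → ℝ)
    (sgn : ℕ → ℝ)
    (T : ℝ)
    (hmi : ∀ i, d - 1 ≤ i → i ≤ m - d →
      ∃ α : ℕ → ℝ,
        (∀ l, l < M → α l = 0 ∨ α l = 1) ∧
        (∑ l ∈ Finset.range M, α l ≤ (M : ℝ) - 1) ∧
        (∀ l, l < M → ∀ j, i - (d - 1) ≤ j → j ≤ i →
          -sgn l * ⟪h l, p j⟫ < -sgn l * k l + T * α l))
    (t : ℝ) (ht1 : τ (d - 1) ≤ t) (ht2 : t < τ (m - d + 1)) :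
    (∑ j ∈ Finset.range (m - d + 1), bspline τ d j t • p j) ∉
      {x : EuclideanSpace ℝ (Fin q) | ∀ l, l < M → sgn l * ⟪h l, x⟫ ≤ sgn l * k l} := by
  obtain ⟨e, rfl⟩ : ∃ e, d = e + 1 := ⟨d - 1, by omega⟩
  simp only [Nat.add_sub_cancel] at ht1 hmi
  -- the knots past `τ m` are unconstrained; extending `τ` strictly monotonically changes none of
  -- the basis functions in the sum
  obtain ⟨τ', hτ', hτ'τ⟩ := exists_strictMono_eq_of_le hτ
  have hspline : ∑ j ∈ range (m - (e + 1) + 1), bspline τ (e + 1) j t • p j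
      = ∑ j ∈ range (m - (e + 1) + 1), bspline τ' (e + 1) j t • p j :=
    sum_congr rfl fun j hj => by
      rw [mem_range] at hj
      rw [bspline_congr _ _ _ fun r _ => (hτ'τ (j + r) (by omega)).symm]
  have hwin : e < m - (e + 1) + 1 :=
    hτ'.lt_iff_lt.1 (by rw [hτ'τ _ (by omega), hτ'τ _ (by omega)]; linarith)
  obtain ⟨i, hei, hin, hit, hti⟩ := exists_le_lt_le_lt_succ τ hwin ht1 ht2
  obtain ⟨α, hα01, hαsum, hαsep⟩ := hmi i hei (by omega)
  obtain ⟨l, hlM, hl0⟩ := exists_eq_zero_of_sum_le_sub_one hα01 hαsum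
  have hhull := sum_bspline_smul_mem_convexHull hτ' p hei (Nat.le_of_lt_succ hin) (t := t)
    (by rwa [hτ'τ i (by omega)]) (by rwa [hτ'τ (i + 1) (by omega)])
  have hhalf : convexHull ℝ (p '' Set.Icc (i - e) i) ⊆ {x | sgn l * k l < sgn l * ⟪h l, x⟫} :=
    convexHull_min (Set.image_subset_iff.2 fun j hj => by
        have := hαsep l hlM j hj.1 hj.2
        rw [hl0, mul_zero, add_zero] at this
        simp only [Set.mem_preimage, Set.mem_ofPred_eq]
        linarith)
      (convex_halfSpace_gt (f := fun x => sgn l * ⟪h l, x⟫) (sgn l • innerₗ _ (h l)).isLinear _)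
  rw [hspline]
  exact fun hA => (hA l hlM).not_gt (hhalf hhull)

/-- Corollary 1: mixed-integer obstacle avoidance.  The obstacle
is the polyhedral cell of a hyperplane arrangement selected by the sign tuple
`sgn`, and for each window of `d` consecutive control points at least one
support hyperplane (selected via the binary variables `α`) separates the
window from the cell (here `n = m - d`; hyperplanes are indexed `0, …, M-1`). -/
theorem bspline_mixed_integer_obstacle_avoidance (q m d M : ℕ) (τ : ℕ → ℝ)
    (hτ : ∀ j, j < m → τ j < τ (j + 1))
    (hd : 1 ≤ d) (hdm : d ≤ m)
    (p : ℕ → EuclideanSpace ℝ (Fin q))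
    (h : ℕ → EuclideanSpace ℝ (Fin q)) (k : ℕ → ℝ)
    (sgn : ℕ → ℝ) (hsgn : ∀ l, l < M → sgn l = 1 ∨ sgn l = -1)
    (T : ℝ)
    (hmi : ∀ i, d - 1 ≤ i → i ≤ m - d →
      ∃ α : ℕ → ℝ,
        (∀ l, l < M → α l = 0 ∨ α l = 1) ∧
        (∑ l ∈ Finset.range M, α l ≤ (M : ℝ) - 1) ∧
        (∀ l, l < M → ∀ j, i - (d - 1) ≤ j → j ≤ i →
          -sgn l * ⟪h l, p j⟫ < -sgn l * k l + T * α l))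
    (t : ℝ) (ht1 : τ (d - 1) ≤ t) (ht2 : t < τ (m - d + 1)) :
    (∑ j ∈ Finset.range (m - d + 1), bspline τ d j t • p j) ∉
      {x : EuclideanSpace ℝ (Fin q) | ∀ l, l < M → sgn l * ⟪h l, x⟫ ≤ sgn l * k l} :=
  bspline_mixed_integer_obstacle_avoidance_general q m d M τ hτ hd hdm p h k sgn T hmi t ht1 ht2
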